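/- arXiv:2103.17169 — 6 statements merged into one kernel-verified Lean document; each statement's English description precedes it below -/
import Mathlib

section
/- There exists a coherent quasi-inductive system of ideals whose inductive limit is not an ideal. Concretely: with I = ω∖{0}, ideals Fin^i (Fin^1 = Fin, Fin^{i+1} = Fin ⊗ Fin^i on ω^{i+1}), the quasi-homomorphisms π_{1,i} : ω^i ∖ ({0}×ω^{i-1}) → ω given by projection onto the last coordinate, and π_{i,j} : ω^j → ω^i (for 1 < i ≤ j) the projection onto the last i coordinates, form a coherent system whose inductive limit J is not closed under finite unions: there exist A, B with complements in J but (A ∩ B)ᶜ ∉ J. -/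
/-- `FinPow n` is the Fubini power `Fin^{n+1}` of the ideal of finite sets, an
ideal on `ω^{n+1}` (represented as `Fin (n+1) → ℕ`). -/
def FinPow : (n : ℕ) → Set (Set (Fin (n + 1) → ℕ))
  | 0 => {A | A.Finite}
  | n + 1 => {A | {k : ℕ | {y : Fin (n + 1) → ℕ | Fin.cons k y ∈ A} ∉ FinPow n}.Finite}

/-- Projection of `ω^n` onto the last `m` coordinates. -/
def lastProj {m n : ℕ} (h : m ≤ n) (x : Fin n → ℕ) : Fin m → ℕ :=
  fun k => x ⟨n - m + k.val, by have := k.isLt; omega⟩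

/-- The inductive limit `Fin_ω` of the Fubini powers `(Fin^n)_{n>0}` along the
projections onto the last coordinates. -/
def FinOmega : Set (Set (Σ n : ℕ, Fin (n + 1) → ℕ)) :=
  {M | ∃ m : ℕ, ∃ P : Set (Fin (m + 1) → ℕ), Pᶜ ∈ FinPow m ∧
    ∀ (n : ℕ) (h : m ≤ n), ∀ x : Fin (n + 1) → ℕ,
      lastProj (Nat.succ_le_succ h) x ∈ P → (⟨n, x⟩ : Σ n : ℕ, Fin (n + 1) → ℕ) ∉ M}

/-- The domain of the quasi-homomorphism `π_{m+1,n+1}` of the counterexample: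
the full space, except that `π_{1,n+1}` (for `n ≥ 1`) is only defined on
`ω^{n+1} ∖ ({0} × ω^n)`. -/
def exDom (m n : ℕ) : Set (Fin (n + 1) → ℕ) :=
  if m = 0 ∧ 0 < n then {x | x 0 ≠ 0} else Set.univ

/-- The inductive limit of the system `(Fin^{n+1}, π_{m+1,n+1}|exDom)`. -/
def exLim : Set (Set (Σ n : ℕ, Fin (n + 1) → ℕ)) :=
  {M | ∃ m : ℕ, ∃ P : Set (Fin (m + 1) → ℕ), Pᶜ ∈ FinPow m ∧
    ∀ (n : ℕ) (h : m ≤ n), ∀ x ∈ exDom m n,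
      lastProj (Nat.succ_le_succ h) x ∈ P →
        (⟨n, x⟩ : Σ n : ℕ, Fin (n + 1) → ℕ) ∉ M}

lemma finPow_mono : ∀ {n : ℕ} {A B : Set (Fin (n + 1) → ℕ)},
    A ⊆ B → B ∈ FinPow n → A ∈ FinPow n := by
  intro n
  induction n with
  | zero => intro A B h hB; exact hB.subset h
  | succ n ih =>
    intro A B h hB
    refine hB.subset ?_
    intro k hk hBk
    exact hk (ih (fun y hy => h hy) hBk)

lemma finPow_empty : ∀ n : ℕ, (∅ : Set (Fin (n + 1) → ℕ)) ∈ FinPow n := by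
  intro n
  induction n with
  | zero => exact Set.finite_empty
  | succ n ih =>
    show Set.Finite _
    convert Set.finite_empty
    ext k
    simpa using ih

lemma finPow_univ_not : ∀ n : ℕ, (Set.univ : Set (Fin (n + 1) → ℕ)) ∉ FinPow n := by
  intro n
  induction n with
  | zero => exact fun h => Set.infinite_univ h
  | succ n ih =>
    intro h
    have h' : {k : ℕ | {y : Fin (n + 1) → ℕ | Fin.cons k y ∈ (Set.univ : Set (Fin (n + 2) → ℕ))} ∉ FinPow n}.Finite := h
    have heq : {k : ℕ | {y : Fin (n + 1) → ℕ | Fin.cons k y ∈ (Set.univ : Set (Fin (n + 2) → ℕ))} ∉ FinPow n} = Set.univ := by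
      ext k; simpa using ih
    rw [heq] at h'
    exact Set.infinite_univ h'

lemma lastProj_refl {n : ℕ} (h : n ≤ n) (x : Fin n → ℕ) : lastProj h x = x := by
  funext j
  exact congrArg x (Fin.ext (by simp))

lemma cons_eq {n : ℕ} (k : ℕ) (y : Fin (n + 1) → ℕ) (i : Fin (n + 2)) (a : ℕ)
    (hlt : a < n + 1) (ha : (i : ℕ) = a + 1) :
    (Fin.cons k y : Fin (n + 2) → ℕ) i = y ⟨a, hlt⟩ := by
  have : i = Fin.succ ⟨a, hlt⟩ := Fin.ext (by simp [ha])
  rw [this, Fin.cons_succ]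

lemma lastProj_cons {m n : ℕ} (h1 : m + 1 ≤ n + 2) (h2 : m + 1 ≤ n + 1)
    (k : ℕ) (y : Fin (n + 1) → ℕ) :
    lastProj h1 (Fin.cons k y) = lastProj h2 y := by
  funext j
  simp only [lastProj]
  exact cons_eq _ _ _ _ _ (by have := j.isLt; simp only [Fin.val_mk]; omega)

lemma finPow_preimage : ∀ (n m : ℕ) (h : m ≤ n) (A : Set (Fin (m + 1) → ℕ)), A ∈ FinPow m →
    {x : Fin (n + 1) → ℕ | lastProj (Nat.succ_le_succ h) x ∈ A} ∈ FinPow n := by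
  intro n
  induction n with
  | zero =>
    intro m h A hA
    obtain rfl : m = 0 := Nat.le_zero.mp h
    have : {x : Fin 1 → ℕ | lastProj (Nat.succ_le_succ h) x ∈ A} = A := by
      ext x; simp [lastProj_refl]
    rw [this]; exact hA
  | succ n ih =>
    intro m h A hA
    by_cases hmn : m = n + 1
    · subst hmn
      have : {x : Fin (n + 2) → ℕ | lastProj (Nat.succ_le_succ h) x ∈ A} = A := by
        ext x; simp [lastProj_refl]
      rw [this]; exact hA
    · have h2 : m ≤ n := by omega
      show Set.Finite _
      convert Set.finite_empty
      ext k
      simp only [Set.mem_setOf_eq, Set.mem_empty_iff_false, iff_false, not_not]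
      have : {y : Fin (n + 1) → ℕ | lastProj (Nat.succ_le_succ h) (Fin.cons k y) ∈ A} =
          {y : Fin (n + 1) → ℕ | lastProj (Nat.succ_le_succ h2) y ∈ A} := by
        ext y
        rw [Set.mem_setOf_eq, Set.mem_setOf_eq,
          lastProj_cons (Nat.succ_le_succ h) (Nat.succ_le_succ h2)]
      show {y : Fin (n + 1) → ℕ | lastProj (Nat.succ_le_succ h) (Fin.cons k y) ∈ A} ∈ FinPow n
      rw [this]
      exact ih m h2 A hA

lemma firstZero_mem (n : ℕ) : {x : Fin (n + 2) → ℕ | x 0 = 0} ∈ FinPow (n + 1) := by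
  show Set.Finite _
  apply Set.Finite.subset (Set.finite_singleton 0)
  intro k hk
  simp only [Set.mem_setOf_eq] at hk
  simp only [Set.mem_singleton_iff]
  by_contra hk0
  apply hk
  show {y : Fin (n + 1) → ℕ | (Fin.cons k y : Fin (n + 2) → ℕ) 0 = 0} ∈ FinPow n
  have he : {y : Fin (n + 1) → ℕ | (Fin.cons k y : Fin (n + 2) → ℕ) 0 = 0} = ∅ := by
    ext y; simp [Fin.cons_zero, hk0]
  rw [he]; exact finPow_empty n

/-- The maps `π_{m+1,n+1}` (projections onto the last `m+1`
coordinates, with the restricted domains `exDom`) form a coherent system of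
quasi-homomorphisms for `(Fin^{n+1})_n`, but its inductive limit is not closed
under finite unions: there are `A`, `B` with `Aᶜ, Bᶜ` in the limit but
`(A ∩ B)ᶜ` not in the limit. So the inductive limit is not an ideal. -/
theorem inductiveLimit_not_ideal :
    (∀ (m n : ℕ) (h : m ≤ n),
      (exDom m n)ᶜ ∈ FinPow n ∧
      ∀ A ∈ FinPow m,
        {x : Fin (n + 1) → ℕ | x ∈ exDom m n ∧ lastProj (Nat.succ_le_succ h) x ∈ A}
          ∈ FinPow n) ∧
    (∀ (m p n : ℕ) (hmp : m ≤ p) (hpn : p ≤ n), ∀ x : Fin (n + 1) → ℕ,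
      x ∈ exDom m n → x ∈ exDom p n →
      lastProj (Nat.succ_le_succ hpn) x ∈ exDom m p →
      lastProj (Nat.succ_le_succ (hmp.trans hpn)) x =
        lastProj (Nat.succ_le_succ hmp) (lastProj (Nat.succ_le_succ hpn) x)) ∧
    (∃ A B : Set (Σ n : ℕ, Fin (n + 1) → ℕ),
      Aᶜ ∈ exLim ∧ Bᶜ ∈ exLim ∧ (A ∩ B)ᶜ ∉ exLim) := by
  refine ⟨?_, ?_, ?_⟩
  · intro m n h
    constructor
    · by_cases hc : m = 0 ∧ 0 < n
      · obtain ⟨rfl, hn⟩ := hc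
        obtain ⟨n', rfl⟩ : ∃ n', n = n' + 1 := ⟨n - 1, by omega⟩
        have he : (exDom 0 (n' + 1))ᶜ = {x : Fin (n' + 2) → ℕ | x 0 = 0} := by
          ext x; simp [exDom]
        rw [he]
        exact firstZero_mem n'
      · have he : (exDom m n)ᶜ = ∅ := by
          rw [exDom, if_neg hc, Set.compl_univ]
        rw [he]; exact finPow_empty n
    · intro A hA
      exact finPow_mono (fun x hx => hx.2) (finPow_preimage n m h A hA)
  · intro m p n hmp hpn x _ _ _
    funext j
    have hj := j.isLt
    simp only [lastProj]
    exact congrArg x (Fin.ext (by show n + 1 - (m + 1) + (j : ℕ) =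
      n + 1 - (p + 1) + (p + 1 - (m + 1) + (j : ℕ)); omega))
  · refine ⟨{q : Σ n : ℕ, Fin (n + 1) → ℕ | q.1 = 0 ∨ q.2 0 ≠ 0},
      {q : Σ n : ℕ, Fin (n + 1) → ℕ |
        1 ≤ q.1 ∧ q.2 ⟨q.1 - 1, by omega⟩ < q.2 ⟨q.1, by omega⟩}, ?_, ?_, ?_⟩
    · refine ⟨0, Set.univ, ?_, ?_⟩
      · show (Set.univᶜ : Set (Fin 1 → ℕ)).Finite
        rw [Set.compl_univ]; exact Set.finite_empty
      · intro n hn x hx _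
        simp only [Set.mem_compl_iff, not_not, Set.mem_setOf_eq]
        rcases Nat.eq_zero_or_pos n with rfl | hn'
        · exact Or.inl rfl
        · refine Or.inr ?_
          rw [exDom, if_pos ⟨rfl, hn'⟩] at hx
          exact hx
    · refine ⟨1, {y : Fin 2 → ℕ | y 0 < y 1}, ?_, ?_⟩
      · show Set.Finite _
        have he : {k : ℕ | {y : Fin 1 → ℕ | (Fin.cons k y : Fin 2 → ℕ) ∈
            ({y : Fin 2 → ℕ | y 0 < y 1})ᶜ} ∉ FinPow 0} = ∅ := by
          ext k
          simp only [Set.mem_setOf_eq, Set.mem_empty_iff_false, iff_false, not_not]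
          show Set.Finite _
          have h2 : {y : Fin 1 → ℕ | (Fin.cons k y : Fin 2 → ℕ) ∈
              ({y : Fin 2 → ℕ | y 0 < y 1})ᶜ} ⊆ (fun y : Fin 1 → ℕ => y 0) ⁻¹' Set.Iic k := by
            intro y hy
            simp only [Set.mem_compl_iff, Set.mem_setOf_eq, not_lt] at hy
            have c0 : (Fin.cons k y : Fin 2 → ℕ) 0 = k := rfl
            have c1 : (Fin.cons k y : Fin 2 → ℕ) 1 = y 0 := rfl
            rw [c0, c1] at hy
            exact hy
          refine Set.Finite.subset ?_ h2
          apply Set.Finite.preimage ?_ (Set.finite_Iic k)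
          intro a _ b _ hab
          funext i
          have : i = 0 := Fin.eq_zero i
          rw [this]; exact hab
        rw [he]; exact Set.finite_empty
      · intro n hn x hx hproj
        simp only [Set.mem_compl_iff, not_not, Set.mem_setOf_eq]
        have hlt : lastProj (Nat.succ_le_succ hn) x 0 < lastProj (Nat.succ_le_succ hn) x 1 :=
          hproj
        have h0 : lastProj (Nat.succ_le_succ hn) x 0 = x ⟨n - 1, by omega⟩ := by
          simp only [lastProj]
          exact congrArg x (Fin.ext (by
            show n + 1 - 2 + ((0 : Fin 2) : ℕ) = n - 1
            simp only [Fin.val_zero]; omega))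
        have h1 : lastProj (Nat.succ_le_succ hn) x 1 = x ⟨n, by omega⟩ := by
          simp only [lastProj]
          exact congrArg x (Fin.ext (by
            show n + 1 - 2 + ((1 : Fin 2) : ℕ) = n
            simp only [Fin.val_one]; omega))
        rw [h0, h1] at hlt
        exact ⟨hn, hlt⟩
    · rintro ⟨m, P, hP, hall⟩
      have hPne : P.Nonempty := by
        rcases P.eq_empty_or_nonempty with he | hne
        · exfalso
          apply finPow_univ_not m
          rw [← Set.compl_empty, ← he]
          exact hP
        · exact hne
      obtain ⟨y, hy⟩ := hPne
      rcases Nat.eq_zero_or_pos m with rfl | hm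
      · have hd : y ∈ exDom 0 0 := by rw [exDom, if_neg (by omega)]; trivial
        have hproj : lastProj (Nat.succ_le_succ (le_refl 0)) y ∈ P := by
          rw [lastProj_refl]; exact hy
        have := hall 0 le_rfl y hd hproj
        apply this
        simp only [Set.mem_compl_iff, Set.mem_inter_iff, Set.mem_setOf_eq]
        intro hAB
        exact absurd hAB.2.1 (by omega)
      · have hd : (Fin.cons 0 y : Fin (m + 2) → ℕ) ∈ exDom m (m + 1) := by
          rw [exDom, if_neg (by omega)]; trivial
        have hproj : lastProj (Nat.succ_le_succ (Nat.le_succ m)) (Fin.cons 0 y) ∈ P := by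
          rw [lastProj_cons (Nat.succ_le_succ (Nat.le_succ m)) (le_refl (m + 1)),
            lastProj_refl]
          exact hy
        have := hall (m + 1) (Nat.le_succ m) (Fin.cons 0 y) hd hproj
        apply this
        simp only [Set.mem_compl_iff, Set.mem_inter_iff, Set.mem_setOf_eq]
        intro hAB
        rcases hAB.1 with h0 | h0
        · omega
        · exact h0 rfl
end

section
/- If a quasi-inductive system of ideals (I_i, π_{i,j})_{i≤j, i,j∈I} is coherent and satisfies condition (C) (for all i ≤ j ≤ k, π_{j,k}⁻¹(dom(π_{i,j})) ⊆ dom(π_{i,k})), then its inductive limit lim←(I_i) is an ideal. -/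
/-- An ideal on a set `X`: a family of subsets of `X` closed under subsets and
finite unions, containing all finite sets, and proper. -/
structure IdealOn (X : Type*) where
  sets : Set (Set X)
  subset_mem : ∀ ⦃A B : Set X⦄, A ∈ sets → B ⊆ A → B ∈ sets
  union_mem : ∀ ⦃A B : Set X⦄, A ∈ sets → B ∈ sets → A ∪ B ∈ sets
  finite_mem : ∀ A : Set X, A.Finite → A ∈ sets
  univ_not_mem : Set.univ ∉ sets

/-- The dual filter of an ideal: the family of complements of its members. -/
def IdealOn.dual {X : Type*} (I : IdealOn X) : Set (Set X) := (·ᶜ) '' I.sets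

/-- A quasi-inductive system of ideals: ideals `idl i` on `X i` over a preorder
`ι`, together with quasi-homomorphisms `map h : X j → X i` (for `h : i ≤ j`)
defined on `dom h ∈ (idl j)*` with preimages of `idl i`-sets in `idl j`
(the values of `map h` outside `dom h` are irrelevant). -/
structure QuasiSystem (ι : Type*) [Preorder ι] (X : ι → Type*) where
  idl : ∀ i, IdealOn (X i)
  dom : ∀ {i j : ι}, i ≤ j → Set (X j)
  map : ∀ {i j : ι}, i ≤ j → X j → X i
  dom_mem : ∀ {i j : ι} (h : i ≤ j), (dom h)ᶜ ∈ (idl j).sets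
  preimage_mem : ∀ {i j : ι} (h : i ≤ j), ∀ A ∈ (idl i).sets,
    {x : X j | x ∈ dom h ∧ map h x ∈ A} ∈ (idl j).sets

/-- Coherence: `π_{i,k} = π_{i,j} ∘ π_{j,k}` on the appropriate common domain. -/
def QuasiSystem.Coherent {ι : Type*} [Preorder ι] {X : ι → Type*}
    (S : QuasiSystem ι X) : Prop :=
  ∀ {i j k : ι} (hij : i ≤ j) (hjk : j ≤ k) (x : X k),
    x ∈ S.dom (hij.trans hjk) → x ∈ S.dom hjk → S.map hjk x ∈ S.dom hij →
    S.map (hij.trans hjk) x = S.map hij (S.map hjk x)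

/-- Condition (C): the system is coherent and
`π_{j,k}⁻¹(dom(π_{i,j})) ⊆ dom(π_{i,k})` for all `i ≤ j ≤ k`. -/
def QuasiSystem.CondC {ι : Type*} [Preorder ι] {X : ι → Type*}
    (S : QuasiSystem ι X) : Prop :=
  S.Coherent ∧ ∀ {i j k : ι} (hij : i ≤ j) (hjk : j ≤ k) (x : X k),
    x ∈ S.dom hjk → S.map hjk x ∈ S.dom hij → x ∈ S.dom (hij.trans hjk)

/-- The inductive limit: all `M ⊆ ∑_i dom(I_i)` such that for some `i` and some
`P` in the dual filter of `I_i`, `M` is disjoint from `∑_{j≥i} π_{i,j}⁻¹[P]`. -/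
def QuasiSystem.limit {ι : Type*} [Preorder ι] {X : ι → Type*}
    (S : QuasiSystem ι X) : Set (Set (Σ i, X i)) :=
  {M | ∃ i : ι, ∃ P : Set (X i), Pᶜ ∈ (S.idl i).sets ∧
    ∀ (j : ι) (h : i ≤ j), ∀ x : X j, x ∈ S.dom h → S.map h x ∈ P →
      (⟨j, x⟩ : Σ i, X i) ∉ M}

/-- `Ī_i`: the members of the inductive limit witnessed by the index `i`. -/
def QuasiSystem.Ibar {ι : Type*} [Preorder ι] {X : ι → Type*}
    (S : QuasiSystem ι X) (i : ι) : Set (Set (Σ i, X i)) :=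
  {M | ∃ P : Set (X i), Pᶜ ∈ (S.idl i).sets ∧
    ∀ (j : ι) (h : i ≤ j), ∀ x : X j, x ∈ S.dom h → S.map h x ∈ P →
      (⟨j, x⟩ : Σ i, X i) ∉ M}

/-!
The limit is the union of the families `Ī_i`. Each `Ī_i` is closed under subsets and binary
unions (intersect the witnesses), and omits the whole space because `π_{i,i}⁻¹[P]` has
complement in `I_i` and so is nonempty. Condition (C) with coherence makes `i ↦ Ī_i` monotone:
a witness `P` at level `i` pulls back to the witness `π_{i,k}⁻¹[P]` at level `k`. Over a
directed index set the limit is thus a directed union of families closed under finite unions,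
and it contains the singletons of every level, hence all finite sets.
-/

namespace QuasiSystem

variable {ι : Type*} [Preorder ι] {X : ι → Type*} (S : QuasiSystem ι X)

/-- `π_{i,j}⁻¹[P]`, taken inside the domain of `π_{i,j}`. -/
def preimage {i j : ι} (h : i ≤ j) (P : Set (X i)) : Set (X j) :=
  {y | y ∈ S.dom h ∧ S.map h y ∈ P}

theorem compl_preimage_mem {i j : ι} (h : i ≤ j) {P : Set (X i)}
    (hP : Pᶜ ∈ (S.idl i).sets) : (S.preimage h P)ᶜ ∈ (S.idl j).sets := by
  have hcompl : (S.preimage h P)ᶜ = (S.dom h)ᶜ ∪ S.preimage h Pᶜ := by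
    ext y
    by_cases hy : y ∈ S.dom h <;> simp [preimage, hy]
  rw [hcompl]
  exact (S.idl j).union_mem (S.dom_mem h) (S.preimage_mem h _ hP)

theorem Ibar_mono (hC : S.CondC) {i k : ι} (hik : i ≤ k) : S.Ibar i ⊆ S.Ibar k := by
  rintro M ⟨P, hP, hMP⟩
  refine ⟨S.preimage hik P, S.compl_preimage_mem hik hP, ?_⟩
  rintro j hkj x hx ⟨hdom, hmap⟩
  have hx' : x ∈ S.dom (hik.trans hkj) := hC.2 hik hkj x hx hdom
  exact hMP j _ x hx' (hC.1 hik hkj x hx' hx hdom ▸ hmap)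

theorem mem_Ibar_of_subset {i : ι} {M N : Set (Σ i, X i)} (hM : M ∈ S.Ibar i) (hNM : N ⊆ M) :
    N ∈ S.Ibar i := by
  obtain ⟨P, hP, hMP⟩ := hM
  exact ⟨P, hP, fun j h x hx hm hN => hMP j h x hx hm (hNM hN)⟩

theorem union_mem_Ibar {i : ι} {A B : Set (Σ i, X i)} (hA : A ∈ S.Ibar i) (hB : B ∈ S.Ibar i) :
    A ∪ B ∈ S.Ibar i := by
  obtain ⟨P, hP, hAP⟩ := hA
  obtain ⟨Q, hQ, hBQ⟩ := hB
  refine ⟨P ∩ Q, Set.compl_inter P Q ▸ (S.idl i).union_mem hP hQ, ?_⟩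
  rintro j h x hx ⟨hmP, hmQ⟩ (hxA | hxB)
  · exact hAP j h x hx hmP hxA
  · exact hBQ j h x hx hmQ hxB

theorem empty_mem_Ibar (i : ι) : ∅ ∈ S.Ibar i :=
  ⟨Set.univ, Set.compl_univ ▸ (S.idl i).finite_mem _ Set.finite_empty,
    fun _ _ _ _ _ => Set.notMem_empty _⟩

theorem singleton_mem_Ibar (j : ι) (x : X j) : {⟨j, x⟩} ∈ S.Ibar j := by
  set P := (S.map le_rfl '' ({x} ∩ S.dom le_rfl))ᶜ
  have hP : Pᶜ ∈ (S.idl j).sets := by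
    rw [compl_compl]
    exact (S.idl j).finite_mem _ (((Set.finite_singleton x).inter_of_left _).image _)
  refine ⟨P, hP, ?_⟩
  intro k h y hy hmy hyx
  obtain ⟨rfl, hxy⟩ := Sigma.mk.inj_iff.mp (Set.mem_singleton_iff.mp hyx)
  cases hxy
  exact hmy ⟨y, ⟨rfl, hy⟩, rfl⟩

theorem univ_notMem_Ibar (i : ι) : Set.univ ∉ S.Ibar i := by
  rintro ⟨P, hP, hnot⟩
  have hempty : S.preimage le_rfl P = ∅ :=
    Set.eq_empty_of_forall_notMem fun x ⟨hx, hm⟩ => hnot i le_rfl x hx hm (Set.mem_univ _)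
  have huniv := S.compl_preimage_mem le_rfl hP
  rw [hempty, Set.compl_empty] at huniv
  exact (S.idl i).univ_not_mem huniv

variable [IsDirected ι (· ≤ ·)]

theorem union_mem_limit (hC : S.CondC) {A B : Set (Σ i, X i)} (hA : A ∈ S.limit)
    (hB : B ∈ S.limit) : A ∪ B ∈ S.limit := by
  obtain ⟨i, hAi⟩ := hA
  obtain ⟨i', hBi'⟩ := hB
  obtain ⟨k, hik, hi'k⟩ := directed_of (· ≤ ·) i i'
  exact ⟨k, S.union_mem_Ibar (S.Ibar_mono hC hik hAi) (S.Ibar_mono hC hi'k hBi')⟩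

theorem finite_mem_limit [Nonempty ι] (hC : S.CondC) {A : Set (Σ i, X i)} (hA : A.Finite) :
    A ∈ S.limit := by
  induction A, hA using Set.Finite.induction_on with
  | empty => exact ⟨Classical.arbitrary ι, S.empty_mem_Ibar _⟩
  | @insert z s _ _ hs =>
    rw [Set.insert_eq]
    exact S.union_mem_limit hC ⟨z.1, S.singleton_mem_Ibar z.1 z.2⟩ hs

def limitIdeal [Nonempty ι] (hC : S.CondC) : IdealOn (Σ i, X i) where
  sets := S.limit
  subset_mem := fun _ _ ⟨i, hA⟩ hBA => ⟨i, S.mem_Ibar_of_subset hA hBA⟩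
  union_mem := fun _ _ => S.union_mem_limit hC
  finite_mem := fun _ => S.finite_mem_limit hC
  univ_not_mem := fun ⟨i, hi⟩ => S.univ_notMem_Ibar i hi

end QuasiSystem

/-- If a quasi-inductive system of ideals over a (nonempty)
directed index set is coherent and satisfies condition (C), then its inductive
limit is an ideal. -/
theorem limit_isIdeal_of_condC {ι : Type*} [Preorder ι] [Nonempty ι]
    {X : ι → Type*} (hdir : ∀ i j : ι, ∃ k, i ≤ k ∧ j ≤ k)
    (S : QuasiSystem ι X) (hC : S.CondC) :
    ∃ K : IdealOn (Σ i, X i), K.sets = S.limit :=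
  have : IsDirected ι (· ≤ ·) := ⟨hdir⟩
  ⟨S.limitIdeal hC, rfl⟩
end

section
/- In a quasi-inductive system satisfying condition (C), the family Ī_i = {M ⊆ ∑_k dom(I_k) : ∃ P ∈ I_i*, M ∩ (∑_{j≥i} π_{i,j}⁻¹[P]) = ∅} satisfies Ī_i ⊆ Ī_j whenever i ≤ j; hence the inductive limit is the union of the increasing family (Ī_i). -/
/-- In a quasi-inductive system satisfying condition (C), the
families `Ī_i` are increasing: `Ī_i ⊆ Ī_j` whenever `i ≤ j`; hence the inductive
limit is the union of the increasing family `(Ī_i)`. -/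
theorem Ibar_mono_of_condC {ι : Type*} [Preorder ι] {X : ι → Type*}
    (hdir : ∀ i j : ι, ∃ k, i ≤ k ∧ j ≤ k)
    (S : QuasiSystem ι X) (hC : S.CondC) :
    (∀ i j : ι, i ≤ j → S.Ibar i ⊆ S.Ibar j) ∧ S.limit = ⋃ i : ι, S.Ibar i := by
  obtain ⟨hcoh, hc⟩ := hC
  constructor
  · rintro i j hij M ⟨P, hPc, hP⟩
    refine ⟨{x : X j | x ∈ S.dom hij ∧ S.map hij x ∈ P}, ?_, ?_⟩
    · have h1 : (S.dom hij)ᶜ ∈ (S.idl j).sets := S.dom_mem hij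
      have h2 : {x : X j | x ∈ S.dom hij ∧ S.map hij x ∈ Pᶜ} ∈ (S.idl j).sets :=
        S.preimage_mem hij _ hPc
      have h3 := (S.idl j).union_mem h1 h2
      refine (S.idl j).subset_mem h3 ?_
      intro x hx
      by_cases hd : x ∈ S.dom hij
      · right; exact ⟨hd, fun hmem => hx ⟨hd, hmem⟩⟩
      · left; exact hd
    · rintro k hjk x hxd ⟨hd2, hmem⟩
      have hik := hc hij hjk x hxd hd2
      have := hcoh hij hjk x hik hxd hd2
      exact hP k (hij.trans hjk) x hik (this ▸ hmem)
  · ext M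
    simp only [QuasiSystem.limit, QuasiSystem.Ibar, Set.mem_setOf_eq, Set.mem_iUnion]
end

section
/- If A ⊆ ω satisfies A ∩ X_{s_0} ∩ ⋯ ∩ X_{s_n} ∈ Fin for all (s_0,…,s_n) ∈ ω × ω² × ⋯ × ω^{n+1}, then A ∈ Fin'_ω. -/
/-- A system of partitions `{X_s : s ∈ ω^{n+1}}` of `ω` into infinite sets,
with all finite cross-intersections infinite. -/
structure PartitionSystem (X : (n : ℕ) → (Fin (n + 1) → ℕ) → Set ℕ) : Prop where
  infinite : ∀ n s, (X n s).Infinite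
  disjoint : ∀ (n : ℕ) (s t : Fin (n + 1) → ℕ), s ≠ t → Disjoint (X n s) (X n t)
  cover : ∀ n : ℕ, (⋃ s, X n s) = Set.univ
  cross : ∀ (F : Finset ℕ) (s : ∀ i : ℕ, Fin (i + 1) → ℕ),
    (⋂ i ∈ F, X i (s i)).Infinite

/-- The copy `Fin^{n+2}({X_s : s ∈ ω^{n+1}})` on `ω` of the Fubini power,
with partition pieces `X s`. -/
def FinPowCopy {n : ℕ} (X : (Fin (n + 1) → ℕ) → Set ℕ) : Set (Set ℕ) :=
  {A | {s : Fin (n + 1) → ℕ | ¬ (A ∩ X s).Finite} ∈ FinPow n}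

/-- `Fin'_ω`: the ideal on `ω` generated by `⋃ n, Fin^{n+2}({X_s : s ∈ ω^{n+1}})`. -/
def FinOmega' (X : (n : ℕ) → (Fin (n + 1) → ℕ) → Set ℕ) : Set (Set ℕ) :=
  {A | ∃ F : Finset ℕ, ∃ B : ℕ → Set ℕ,
    (∀ n ∈ F, B n ∈ FinPowCopy (X n)) ∧ A ⊆ ⋃ n ∈ F, B n}


lemma empty_mem_finPow (n : ℕ) : (∅ : Set (Fin (n + 1) → ℕ)) ∈ FinPow n := by
  induction n with
  | zero => exact Set.finite_empty
  | succ n ih =>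
    show Set.Finite _
    have h : {k : ℕ | {y : Fin (n + 1) → ℕ | Fin.cons k y ∈ (∅ : Set (Fin (n + 2) → ℕ))} ∉ FinPow n} = ∅ := by
      ext k
      simp only [Set.mem_setOf_eq, Set.mem_empty_iff_false, iff_false, not_not,
        Set.setOf_false]
      exact ih
    rw [h]; exact Set.finite_empty

lemma key_finite (X : (n : ℕ) → (Fin (n + 1) → ℕ) → Set ℕ) :
    ∀ (m : ℕ) (C : Set ℕ),
      (∀ s : ∀ i : ℕ, Fin (i + 1) → ℕ, (C ∩ ⋂ i ∈ Finset.range m, X i (s i)).Finite) →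
      ∀ G : ∀ i : ℕ, Set (Fin (i + 1) → ℕ), (∀ i, (G i).Finite) →
      (C ∩ ⋂ i ∈ Finset.range m, ⋃ s ∈ G i, X i s).Finite := by
  intro m
  induction m with
  | zero =>
    intro C hC G hG
    simpa using hC (fun i _ => 0)
  | succ m ih =>
    intro C hC G hG
    have hsub : C ∩ ⋂ i ∈ Finset.range (m + 1), ⋃ s ∈ G i, X i s ⊆
        ⋃ s ∈ G m, ((C ∩ X m s) ∩ ⋂ i ∈ Finset.range m, ⋃ u ∈ G i, X i u) := by
      rintro a ⟨haC, haI⟩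
      simp only [Set.mem_iInter, Set.mem_iUnion, exists_prop] at haI
      obtain ⟨s, hsG, hsX⟩ := haI m (Finset.self_mem_range_succ m)
      refine Set.mem_iUnion₂.mpr ⟨s, hsG, ⟨haC, hsX⟩, ?_⟩
      simp only [Set.mem_iInter, Set.mem_iUnion, exists_prop]
      intro i hi
      exact haI i (Finset.mem_range.mpr (Nat.lt_succ_of_lt (Finset.mem_range.mp hi)))
    refine Set.Finite.subset (Set.Finite.biUnion (hG m) ?_) hsub
    intro s hs
    refine ih (C ∩ X m s) ?_ G hG
    intro s'
    classical
    refine (hC (Function.update s' m s)).subset ?_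
    rintro a ⟨⟨haC, haX⟩, haI⟩
    refine ⟨haC, ?_⟩
    simp only [Set.mem_iInter] at haI ⊢
    intro i hi
    rcases eq_or_ne i m with rfl | hne
    · simpa using haX
    · rw [Function.update_of_ne hne]
      have hi' : i ∈ Finset.range m := by
        have h1 := Finset.mem_range.mp hi
        exact Finset.mem_range.mpr (by omega)
      exact haI i hi'

/-- If `A ⊆ ω` satisfies `A ∩ X_{s_0} ∩ ⋯ ∩ X_{s_n} ∈ Fin`
for all `(s_0,…,s_n) ∈ ω × ω² × ⋯ × ω^{n+1}`, then `A ∈ Fin'_ω`. -/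
theorem mem_finOmega'_of_smallIntersections
    (X : (n : ℕ) → (Fin (n + 1) → ℕ) → Set ℕ) (hX : PartitionSystem X)
    (n : ℕ) (A : Set ℕ)
    (hA : ∀ s : ∀ i : ℕ, Fin (i + 1) → ℕ,
      (A ∩ ⋂ i ∈ Finset.range (n + 1), X i (s i)).Finite) :
    A ∈ FinOmega' X := by
  classical
  induction n generalizing A with
  | zero =>
    refine ⟨{0}, fun _ => A, ?_, ?_⟩
    · intro k hk
      have hk0 : k = 0 := Finset.mem_singleton.mp hk
      subst hk0
      show {s : Fin 1 → ℕ | ¬ (A ∩ X 0 s).Finite} ∈ FinPow 0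
      have h : {s : Fin 1 → ℕ | ¬ (A ∩ X 0 s).Finite} = ∅ := by
        ext s0
        simp only [Set.mem_setOf_eq, Set.mem_empty_iff_false, iff_false, not_not]
        have := hA (fun i => Nat.rec (motive := fun i => Fin (i + 1) → ℕ) s0 (fun _ _ _ => 0) i)
        simpa using this
      rw [h]; exact Set.finite_empty
    · intro a ha
      exact Set.mem_iUnion₂.mpr ⟨0, Finset.mem_singleton_self 0, ha⟩
  | succ n ih =>
    -- addresses
    have hcov : ∀ (i a : ℕ), ∃ s, a ∈ X i s := by
      intro i a
      have h1 : a ∈ ⋃ s, X i s := (hX.cover i) ▸ Set.mem_univ a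
      simpa using h1
    choose σ hσ using hcov
    have hσu : ∀ i a s, a ∈ X i s → σ i a = s := by
      intro i a s h
      by_contra hne
      exact Set.disjoint_left.mp (hX.disjoint i _ _ hne) (hσ i a) h
    -- injections into ℕ
    have hrex : ∀ i : ℕ, ∃ r : (Fin (i + 1) → ℕ) → ℕ, Function.Injective r :=
      fun i => exists_injective_nat _
    choose r hrinj using hrex
    have hGfin : ∀ (c i : ℕ), ({u : Fin (i + 1) → ℕ | r i u ≤ c}).Finite := by
      intro c i
      have h : {u : Fin (i + 1) → ℕ | r i u ≤ c} = r i ⁻¹' (Set.Iic c) := rfl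
      rw [h]
      exact Set.Finite.preimage ((hrinj i).injOn) (Set.finite_Iic c)
    set B : Set ℕ :=
      {a | a ∈ A ∧ ∀ i ∈ Finset.range (n + 1), r i (σ i a) < r (n + 1) (σ (n + 1) a)} with hBdef
    set A' : Set ℕ := A \ B with hA'def
    -- B meets each piece of the (n+1)-st partition finitely
    have hBfin : ∀ t : Fin (n + 2) → ℕ, (B ∩ X (n + 1) t).Finite := by
      intro t
      have hk := key_finite X (n + 2) A hA (fun i => {u | r i u ≤ r (n + 1) t})
        (fun i => hGfin _ i)
      refine hk.subset ?_
      rintro a ⟨⟨haA, hacond⟩, haX⟩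
      have hst : σ (n + 1) a = t := hσu _ _ _ haX
      refine ⟨haA, ?_⟩
      simp only [Set.mem_iInter, Set.mem_iUnion, exists_prop]
      intro i hi
      rcases eq_or_ne i (n + 1) with rfl | hne
      · exact ⟨t, Set.mem_setOf_eq ▸ le_refl (r (n + 1) t), haX⟩
      · have hi' : i ∈ Finset.range (n + 1) := by
          have := Finset.mem_range.mp hi
          exact Finset.mem_range.mpr (by omega)
        refine ⟨σ i a, ?_, hσ i a⟩
        have := hacond i hi'
        rw [hst] at this
        exact le_of_lt this
    -- A' satisfies the hypothesis one level down
    have hA' : ∀ s : ∀ i : ℕ, Fin (i + 1) → ℕ,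
        (A' ∩ ⋂ i ∈ Finset.range (n + 1), X i (s i)).Finite := by
      intro s
      have hk := key_finite X (n + 2) A hA
        (fun i => {u | r i u ≤ (Finset.range (n + 1)).sup (fun j => r j (s j))})
        (fun i => hGfin _ i)
      refine hk.subset ?_
      rintro a ⟨⟨haA, hnB⟩, haI⟩
      simp only [Set.mem_iInter] at haI
      have hσs : ∀ i ∈ Finset.range (n + 1), σ i a = s i := fun i hi => hσu _ _ _ (haI i hi)
      have hnall : ¬ ∀ i ∈ Finset.range (n + 1), r i (σ i a) < r (n + 1) (σ (n + 1) a) :=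
        fun h => hnB ⟨haA, h⟩
      push_neg at hnall
      obtain ⟨j, hj, hjle⟩ := hnall
      refine ⟨haA, ?_⟩
      simp only [Set.mem_iInter, Set.mem_iUnion, exists_prop]
      intro i hi
      rcases eq_or_ne i (n + 1) with rfl | hne
      · refine ⟨σ (n + 1) a, ?_, hσ (n + 1) a⟩
        simp only [Set.mem_setOf_eq]
        calc r (n + 1) (σ (n + 1) a) ≤ r j (σ j a) := hjle
          _ = r j (s j) := by rw [hσs j hj]
          _ ≤ _ := Finset.le_sup (f := fun j => r j (s j)) hj
      · have hi' : i ∈ Finset.range (n + 1) := by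
          have := Finset.mem_range.mp hi
          exact Finset.mem_range.mpr (by omega)
        refine ⟨s i, ?_, haI i hi'⟩
        simp only [Set.mem_setOf_eq]
        exact Finset.le_sup (f := fun j => r j (s j)) hi'
    obtain ⟨F', B', hB'mem, hB'sub⟩ := ih A' hA'
    set D : ℕ → Set ℕ := fun k => if k ∈ F' then B' k else ∅ with hD
    refine ⟨insert (n + 1) F', fun k => if k = n + 1 then B ∪ D (n + 1) else D k, ?_, ?_⟩
    · intro k hk
      dsimp only
      by_cases hkeq : k = n + 1
      · subst hkeq
        rw [if_pos rfl]
        show {t : Fin (n + 2) → ℕ | ¬ ((B ∪ D (n + 1)) ∩ X (n + 1) t).Finite} ∈ FinPow (n + 1)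
        have hset : {t : Fin (n + 2) → ℕ | ¬ ((B ∪ D (n + 1)) ∩ X (n + 1) t).Finite}
            = {t : Fin (n + 2) → ℕ | ¬ (D (n + 1) ∩ X (n + 1) t).Finite} := by
          ext t
          simp only [Set.mem_setOf_eq, Set.union_inter_distrib_right]
          constructor
          · intro h hf; exact h ((hBfin t).union hf)
          · intro h hf; exact h (hf.subset Set.subset_union_right)
        rw [hset]
        by_cases hmem : n + 1 ∈ F'
        · have h1 := hB'mem (n + 1) hmem
          have h2 : D (n + 1) = B' (n + 1) := by rw [hD]; simp [hmem]
          rw [h2]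
          exact h1
        · have h2 : D (n + 1) = ∅ := by rw [hD]; simp [hmem]
          rw [h2]
          have h3 : {t : Fin (n + 2) → ℕ | ¬ ((∅ : Set ℕ) ∩ X (n + 1) t).Finite} = ∅ := by
            ext t; simp
          rw [h3]
          exact empty_mem_finPow (n + 1)
      · rw [if_neg hkeq]
        have hkF' : k ∈ F' := by
          rcases Finset.mem_insert.mp hk with h | h
          · exact absurd h hkeq
          · exact h
        have h2 : D k = B' k := by rw [hD]; simp [hkF']
        rw [h2]
        exact hB'mem k hkF'
    · intro a ha
      by_cases haB : a ∈ B
      · refine Set.mem_iUnion₂.mpr ⟨n + 1, Finset.mem_insert_self _ _, ?_⟩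
        dsimp only
        rw [if_pos rfl]
        exact Set.mem_union_left _ haB
      · have haA' : a ∈ A' := ⟨ha, haB⟩
        obtain ⟨k, hk1, hk2⟩ := Set.mem_iUnion₂.mp (hB'sub haA')
        by_cases hkeq : k = n + 1
        · subst hkeq
          refine Set.mem_iUnion₂.mpr ⟨n + 1, Finset.mem_insert_self _ _, ?_⟩
          dsimp only
          rw [if_pos rfl]
          refine Set.mem_union_right _ ?_
          rw [hD]; simpa [hk1] using hk2
        · refine Set.mem_iUnion₂.mpr ⟨k, Finset.mem_insert_of_mem hk1, ?_⟩
          dsimp only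
          rw [if_neg hkeq, hD]
          simpa [hk1] using hk2
end

section
/- Fin^{n+1} embeds isomorphically into Fin_ω for every n ∈ ω: there is a bijection f : ∑_{i>0} ω^i → ω^{n+1} such that f⁻¹[A] ∈ Fin_ω for all A ∈ Fin^{n+1}. -/
/-!
The innermost factor of `Fin^{n+1}` is `Fin` on the last coordinate, so `Fin^{n+1}` is
preserved by images under maps that change only the last coordinate. Hence it suffices to
find a bijection `f` such that, for every point `x` of length at least `n + 1`, `f x` and the
projection of `x` onto its last `n + 1` coordinates agree except in the last coordinate:
then `f⁻¹[A]` misses every point whose projection avoids the image of `A` under the map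
`f x ↦ (projection of x)`. Such an `f` exists because, for each `b ∈ ω^n`, there are
infinitely many points whose last `n + 1` coordinates start with `b`.
-/

theorem exists_equiv_prod_nat_of_infinite_fibers {X Y : Type*} [Countable X] (π : X → Y)
    (hπ : ∀ y, Infinite {x // π x = y}) : ∃ e : X ≃ Y × ℕ, ∀ x, (e x).1 = π x := by
  have hfib : ∀ y, Nonempty ({x // π x = y} ≃ ℕ) := fun y => nonempty_equiv_of_countable
  exact ⟨(Equiv.sigmaFiberEquiv π).symm.trans
    ((Equiv.sigmaCongrRight fun y => (hfib y).some).trans (Equiv.sigmaEquivProd Y ℕ)),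
    fun _ => rfl⟩

theorem image_mem_finPow {d : ℕ} {ψ : (Fin (d + 1) → ℕ) → Fin (d + 1) → ℕ}
    (hψ : ∀ y, Fin.init (ψ y) = Fin.init y) {D : Set (Fin (d + 1) → ℕ)} (hD : D ∈ FinPow d) :
    ψ '' D ∈ FinPow d := by
  induction d with
  | zero => exact Set.Finite.image ψ hD
  | succ d ih =>
    have hψ_zero : ∀ w, ψ w 0 = w 0 := fun w => by
      simpa [Fin.init] using congrFun (hψ w) 0
    have hsection : ∀ c, {y | Fin.cons c y ∈ ψ '' D} =
        (fun z => Fin.tail (ψ (Fin.cons c z))) '' {z | Fin.cons c z ∈ D} := fun c => by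
      ext y
      constructor
      · rintro ⟨w, hw, hwy⟩
        obtain rfl : w 0 = c := by rw [← hψ_zero w, hwy, Fin.cons_zero]
        refine ⟨Fin.tail w, ?_, ?_⟩
        · show Fin.cons (w 0) (Fin.tail w) ∈ D
          rwa [Fin.cons_self_tail]
        · simp only [Fin.cons_self_tail, hwy, Fin.tail_cons]
      · rintro ⟨z, hz, rfl⟩
        refine ⟨_, hz, ?_⟩
        have := Fin.cons_self_tail (ψ (Fin.cons c z))
        rw [hψ_zero, Fin.cons_zero] at this
        exact this.symm
    refine Set.Finite.subset (s := {c | {y | Fin.cons c y ∈ D} ∉ FinPow d}) hD ?_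
    intro c hc hcD
    refine hc ?_
    rw [hsection]
    refine ih (fun z => ?_) hcD
    rw [← Fin.tail_init_eq_init_tail, hψ, Fin.tail_init_eq_init_tail, Fin.tail_cons]

theorem preimage_mem_finOmega {n : ℕ} (f : (Σ m : ℕ, Fin (m + 1) → ℕ) ≃ (Fin (n + 1) → ℕ))
    (hf : ∀ (k : ℕ) (h : n ≤ k) (x : Fin (k + 1) → ℕ),
      Fin.init (f ⟨k, x⟩) = Fin.init (lastProj (Nat.succ_le_succ h) x))
    {A : Set (Fin (n + 1) → ℕ)} (hA : A ∈ FinPow n) : f ⁻¹' A ∈ FinOmega := by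
  let ψ : (Fin (n + 1) → ℕ) → Fin (n + 1) → ℕ := fun y =>
    if h : n ≤ (f.symm y).1 then lastProj (Nat.succ_le_succ h) (f.symm y).2 else y
  have hψ : ∀ y, Fin.init (ψ y) = Fin.init y := fun y => by
    by_cases h : n ≤ (f.symm y).1
    · simp only [ψ, dif_pos h, ← hf _ h, Sigma.eta, Equiv.apply_symm_apply]
    · simp only [ψ, dif_neg h]
  refine ⟨n, (ψ '' A)ᶜ, by simpa using image_mem_finPow hψ hA, ?_⟩
  intro k hk x hP hx
  refine hP ⟨f ⟨k, x⟩, hx, ?_⟩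
  dsimp only [ψ]
  rw [f.symm_apply_apply]
  exact dif_pos hk

/-- The `n` coordinates preceding the last one (junk value `0` on points of length `≤ n`). -/
def penultimateBlock (n : ℕ) (p : Σ m : ℕ, Fin (m + 1) → ℕ) : Fin n → ℕ :=
  if h : n ≤ p.1 then Fin.init (lastProj (Nat.succ_le_succ h) p.2) else 0

theorem lastProj_self {m : ℕ} (h : m ≤ m) (x : Fin m → ℕ) : lastProj h x = x := by
  funext k
  simp [lastProj]

theorem penultimateBlock_snoc (n : ℕ) (b : Fin n → ℕ) (t : ℕ) :
    penultimateBlock n ⟨n, Fin.snoc b t⟩ = b := by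
  simp [penultimateBlock, lastProj_self]

theorem infinite_penultimateBlock_fiber (n : ℕ) (b : Fin n → ℕ) :
    Infinite {p // penultimateBlock n p = b} := by
  refine Infinite.of_injective (fun t : ℕ => ⟨⟨n, Fin.snoc b t⟩, penultimateBlock_snoc n b t⟩)
    fun t t' htt' => ?_
  simp only [Subtype.mk.injEq, Sigma.mk.inj_iff, heq_eq_eq, true_and] at htt'
  simpa using congrFun htt' (Fin.last n)

/-- `Fin^{n+1}` embeds isomorphically into `Fin_ω` for every
`n`: there is a bijection `f : ∑_{i>0} ω^i → ω^{n+1}` such that `f⁻¹[A] ∈ Fin_ω`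
for all `A ∈ Fin^{n+1}`. -/
theorem finPow_isoContained_finOmega (n : ℕ) :
    ∃ f : (Σ m : ℕ, Fin (m + 1) → ℕ) → (Fin (n + 1) → ℕ), Function.Bijective f ∧
      ∀ A ∈ FinPow n, f ⁻¹' A ∈ FinOmega := by
  obtain ⟨e, he⟩ := exists_equiv_prod_nat_of_infinite_fibers (penultimateBlock n)
    (infinite_penultimateBlock_fiber n)
  let f := (e.trans (Equiv.prodComm _ _)).trans (Fin.snocEquiv fun _ => ℕ)
  refine ⟨f, f.bijective, fun A hA => preimage_mem_finOmega f (fun k h x => ?_) hA⟩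
  show Fin.init (Fin.snoc (α := fun _ => ℕ) (e ⟨k, x⟩).1 (e ⟨k, x⟩).2) = _
  rw [Fin.init_snoc, he, penultimateBlock, dif_pos h]
end

section
/- If Fin^{n+2} ⊑ I for all n ∈ ω via bijections h_n : ω^{n+2} → ω, then there exists an injection f : ω → ω such that f⁻¹[A] ∈ I for every A ∈ Fin'_ω. -/
theorem finPow_zero : FinPow 0 = {A | A.Finite} := rfl
theorem finPow_succ (n : ℕ) : FinPow (n + 1)
    = {A | {k : ℕ | {y : Fin (n + 1) → ℕ | Fin.cons k y ∈ A} ∉ FinPow n}.Finite} := rfl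

/-- helper: init of cons -/
theorem myInitCons {m : ℕ} (k : ℕ) (y : Fin (m + 1) → ℕ) :
    Fin.init (Fin.cons k y : Fin (m + 2) → ℕ) = (Fin.cons k (Fin.init y) : Fin (m + 1) → ℕ) := by
  funext i
  induction i using Fin.cases with
  | zero => simp [Fin.init]
  | succ j =>
    simp only [Fin.init, Fin.cons_succ]
    rw [← Fin.succ_castSucc, Fin.cons_succ]

/-- Sets all of whose last-coordinate fibers are finite are in FinPow. -/
theorem finPow_of_snoc_fibers : ∀ (m : ℕ) (A : Set (Fin (m + 1) → ℕ)),
    (∀ p : Fin m → ℕ, {j : ℕ | Fin.snoc p j ∈ A}.Finite) → A ∈ FinPow m := by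
  intro m
  induction m with
  | zero =>
    intro A hA
    rw [finPow_zero, Set.mem_setOf_eq]
    have h0 := hA Fin.elim0
    apply (h0.image (fun j => (Fin.snoc Fin.elim0 j : Fin 1 → ℕ))).subset
    intro x hx
    have hinit : Fin.init x = Fin.elim0 := by funext i; exact i.elim0
    refine ⟨x (Fin.last 0), ?_, ?_⟩
    · show (Fin.snoc Fin.elim0 (x (Fin.last 0)) : Fin 1 → ℕ) ∈ A
      rw [← hinit, Fin.snoc_init_self]; exact hx
    · show (Fin.snoc Fin.elim0 (x (Fin.last 0)) : Fin 1 → ℕ) = x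
      rw [← hinit, Fin.snoc_init_self]
  | succ m ih =>
    intro A hA
    rw [finPow_succ, Set.mem_setOf_eq]
    have hempty : {k : ℕ | {y : Fin (m + 1) → ℕ | Fin.cons k y ∈ A} ∉ FinPow m} = ∅ := by
      ext k
      simp only [Set.mem_setOf_eq, Set.mem_empty_iff_false, iff_false, not_not]
      apply ih
      intro p
      have heq : {j : ℕ | Fin.snoc p j ∈ {y : Fin (m + 1) → ℕ | Fin.cons k y ∈ A}}
          = {j : ℕ | Fin.snoc (Fin.cons k p) j ∈ A} := by
        ext j
        simp only [Set.mem_setOf_eq, Fin.cons_snoc_eq_snoc_cons]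
      rw [heq]
      exact hA (Fin.cons k p)
    rw [hempty]; exact Set.finite_empty

/-- Cylinders (free last coordinate) over FinPow sets are in FinPow. -/
theorem finPow_cylinder : ∀ (m : ℕ) (S : Set (Fin (m + 1) → ℕ)), S ∈ FinPow m →
    {x : Fin (m + 2) → ℕ | Fin.init x ∈ S} ∈ FinPow (m + 1) := by
  intro m
  induction m with
  | zero =>
    intro S hS
    rw [finPow_zero, Set.mem_setOf_eq] at hS
    rw [finPow_succ, Set.mem_setOf_eq]
    have hsec : ∀ (k : ℕ) (y : Fin 1 → ℕ),
        (Fin.init (Fin.cons k y : Fin 2 → ℕ) ∈ S) ↔ ((fun _ => k : Fin 1 → ℕ) ∈ S) := by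
      intro k y
      rw [myInitCons]
      have hck : (Fin.cons k (Fin.init y) : Fin 1 → ℕ) = (fun _ => k) := by
        funext i
        induction i using Fin.cases with
        | zero => simp
        | succ j => exact j.elim0
      rw [hck]
    have hpre : Set.InjOn (fun k : ℕ => (fun _ => k : Fin 1 → ℕ))
        ((fun k : ℕ => (fun _ => k : Fin 1 → ℕ)) ⁻¹' S) := by
      intro a _ b _ hab
      exact congrFun hab 0
    apply Set.Finite.subset (hS.preimage hpre)
    intro k hk
    simp only [Set.mem_setOf_eq] at hk
    by_contra hne
    apply hk
    rw [finPow_zero, Set.mem_setOf_eq]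
    have hemp : {y : Fin 1 → ℕ | Fin.init (Fin.cons k y : Fin 2 → ℕ) ∈ S} = ∅ := by
      ext y
      simp only [Set.mem_setOf_eq, Set.mem_empty_iff_false, iff_false]
      rw [hsec]
      exact hne
    rw [hemp]; exact Set.finite_empty
  | succ m ih =>
    intro S hS
    rw [finPow_succ, Set.mem_setOf_eq] at hS
    rw [finPow_succ, Set.mem_setOf_eq]
    apply Set.Finite.subset hS
    intro k hk
    simp only [Set.mem_setOf_eq] at hk ⊢
    by_contra hSk
    apply hk
    have heq : {y : Fin (m + 2) → ℕ | Fin.init (Fin.cons k y : Fin (m + 3) → ℕ) ∈ S}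
        = {y : Fin (m + 2) → ℕ | Fin.init y ∈ {z : Fin (m + 1) → ℕ | Fin.cons k z ∈ S}} := by
      ext y
      simp only [Set.mem_setOf_eq, myInitCons]
    rw [heq]
    exact ih _ hSk

/-- The recursive choice sequence. -/
noncomputable def chooseSeq (T : ℕ → Set ℕ) : ℕ → List ℕ
  | 0 => []
  | k + 1 => chooseSeq T k ++ [sInf (T k \ {v | v ∈ chooseSeq T k})]

noncomputable def chooseF (T : ℕ → Set ℕ) (k : ℕ) : ℕ :=
  sInf (T k \ {v | v ∈ chooseSeq T k})

theorem chooseSeq_succ (T : ℕ → Set ℕ) (k : ℕ) :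
    chooseSeq T (k + 1) = chooseSeq T k ++ [chooseF T k] := rfl

theorem mem_chooseSeq (T : ℕ → Set ℕ) (k v : ℕ) :
    v ∈ chooseSeq T k ↔ ∃ j < k, chooseF T j = v := by
  induction k with
  | zero => simp [chooseSeq]
  | succ k ih =>
    rw [chooseSeq_succ]
    simp only [List.mem_append, List.mem_singleton, ih]
    constructor
    · rintro (⟨j, hj, rfl⟩ | rfl)
      · exact ⟨j, by omega, rfl⟩
      · exact ⟨k, by omega, rfl⟩
    · rintro ⟨j, hj, rfl⟩
      rcases Nat.lt_succ_iff_lt_or_eq.mp hj with hj | rfl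
      · exact Or.inl ⟨j, hj, rfl⟩
      · exact Or.inr rfl

theorem chooseF_spec (T : ℕ → Set ℕ) (hT : ∀ k, (T k).Infinite) (k : ℕ) :
    chooseF T k ∈ T k ∧ chooseF T k ∉ chooseSeq T k := by
  have h1 : chooseF T k ∈ T k \ {v | v ∈ chooseSeq T k} :=
    Nat.sInf_mem (((hT k).diff (List.finite_toSet _)).nonempty)
  exact ⟨h1.1, h1.2⟩

theorem chooseF_inj (T : ℕ → Set ℕ) (hT : ∀ k, (T k).Infinite) :
    Function.Injective (chooseF T) := by
  intro a b hab
  by_contra hne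
  rcases Nat.lt_or_ge a b with hlt | hge
  · have h1 : chooseF T a ∈ chooseSeq T b := (mem_chooseSeq T b _).mpr ⟨a, hlt, rfl⟩
    rw [hab] at h1
    exact (chooseF_spec T hT b).2 h1
  · have hlt : b < a := by omega
    have h1 : chooseF T b ∈ chooseSeq T a := (mem_chooseSeq T a _).mpr ⟨b, hlt, rfl⟩
    rw [← hab] at h1
    exact (chooseF_spec T hT a).2 h1

noncomputable def sigAux (h : ∀ n : ℕ, (Fin (n + 2) → ℕ) → ℕ)
    (hbij : ∀ n, Function.Bijective (h n)) (n k : ℕ) : Fin (n + 1) → ℕ :=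
  Fin.init ((Equiv.ofBijective (h n) (hbij n)).symm k)

theorem sigAux_app (h : ∀ n : ℕ, (Fin (n + 2) → ℕ) → ℕ)
    (hbij : ∀ n, Function.Bijective (h n)) (n : ℕ) (x : Fin (n + 2) → ℕ) :
    sigAux h hbij n (h n x) = Fin.init x := by
  unfold sigAux
  have h1 : (Equiv.ofBijective (h n) (hbij n)).symm (h n x) = x :=
    (Equiv.ofBijective (h n) (hbij n)).symm_apply_apply x
  rw [h1]

theorem sigAux_sect (h : ∀ n : ℕ, (Fin (n + 2) → ℕ) → ℕ)
    (hbij : ∀ n, Function.Bijective (h n)) (n k : ℕ) :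
    h n ((Equiv.ofBijective (h n) (hbij n)).symm k) = k := by
  exact (Equiv.ofBijective (h n) (hbij n)).apply_symm_apply k

noncomputable def TAux (X : (n : ℕ) → (Fin (n + 1) → ℕ) → Set ℕ)
    (h : ∀ n : ℕ, (Fin (n + 2) → ℕ) → ℕ)
    (hbij : ∀ n, Function.Bijective (h n)) (k : ℕ) : Set ℕ :=
  ⋂ i ∈ Finset.range (k + 1), X i (sigAux h hbij i k)

/-- If `Fin^{n+2} ⊑ I` for all `n`, witnessed by bijections
`h_n : ω^{n+2} → ω` (i.e. the `h_n`-image of every `Fin^{n+2}`-set is in `I`),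
then there is an injection `f : ω → ω` with `f⁻¹[A] ∈ I` for every `A ∈ Fin'_ω`. -/
theorem exists_injection_witness (X : (n : ℕ) → (Fin (n + 1) → ℕ) → Set ℕ)
    (hX : PartitionSystem X) (I : IdealOn ℕ)
    (h : ∀ n : ℕ, (Fin (n + 2) → ℕ) → ℕ)
    (hbij : ∀ n, Function.Bijective (h n))
    (hwit : ∀ n, ∀ A ∈ FinPow (n + 1), (h n) '' A ∈ I.sets) :
    ∃ f : ℕ → ℕ, Function.Injective f ∧
      ∀ A ∈ FinOmega' X, f ⁻¹' A ∈ I.sets := by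
  classical
  have hT : ∀ k, (TAux X h hbij k).Infinite := by
    intro k
    exact hX.cross (Finset.range (k + 1)) (fun i => sigAux h hbij i k)
  set f := chooseF (TAux X h hbij) with hfdef
  have hinj : Function.Injective f := chooseF_inj _ hT
  have hfX : ∀ n k, n ≤ k → f k ∈ X n (sigAux h hbij n k) := by
    intro n k hnk
    have h1 : f k ∈ ⋂ i ∈ Finset.range (k + 1), X i (sigAux h hbij i k) :=
      (chooseF_spec _ hT k).1
    simp only [Set.mem_iInter] at h1
    exact h1 n (Finset.mem_range.mpr (by omega))
  have key : ∀ (n : ℕ) (B : Set ℕ), B ∈ FinPowCopy (X n) → f ⁻¹' B ∈ I.sets := by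
    intro n B hB
    have hS : {s : Fin (n + 1) → ℕ | ¬(B ∩ X n s).Finite} ∈ FinPow n := hB
    set S : Set (Fin (n + 1) → ℕ) := {s | ¬(B ∩ X n s).Finite} with hSdef
    -- the part where f lands in pieces with large trace
    have hW : {x : Fin (n + 2) → ℕ | Fin.init x ∈ S} ∈ FinPow (n + 1) :=
      finPow_cylinder n S hS
    have hG : {k : ℕ | sigAux h hbij n k ∈ S} ∈ I.sets := by
      apply I.subset_mem (hwit n _ hW)
      intro k hk
      refine ⟨(Equiv.ofBijective (h n) (hbij n)).symm k, ?_, sigAux_sect h hbij n k⟩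
      exact hk
    -- the part where f lands in pieces with finite trace
    have hσ : ∀ (p : Fin (n + 1) → ℕ) (j : ℕ),
        sigAux h hbij n (h n (Fin.snoc p j)) = p := by
      intro p j
      rw [sigAux_app]
      simp
    have hA : (h n) ⁻¹' {k : ℕ | n ≤ k ∧ f k ∈ B ∧ sigAux h hbij n k ∉ S}
        ∈ FinPow (n + 1) := by
      apply finPow_of_snoc_fibers
      intro p
      by_cases hp : p ∈ S
      · have hemp : {j : ℕ | Fin.snoc p j ∈
            (h n) ⁻¹' {k : ℕ | n ≤ k ∧ f k ∈ B ∧ sigAux h hbij n k ∉ S}} = ∅ := by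
          ext j
          simp only [Set.mem_preimage, Set.mem_setOf_eq, Set.mem_empty_iff_false, iff_false]
          rintro ⟨-, -, h3⟩
          rw [hσ p j] at h3
          exact h3 hp
        rw [hemp]; exact Set.finite_empty
      · have hfin : (B ∩ X n p).Finite := not_not.mp hp
        have hginj : Function.Injective (fun j : ℕ => f (h n (Fin.snoc p j))) := by
          intro a b hab
          have h1 := hinj hab
          have h2 := (hbij n).1 h1
          have h3 := congrFun h2 (Fin.last (n + 1))
          simpa [Fin.snoc_last] using h3
        apply (hfin.preimage hginj.injOn).subset
        intro j hj
        obtain ⟨h1, h2, -⟩ := hj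
        refine ⟨h2, ?_⟩
        have h4 := hfX n (h n (Fin.snoc p j)) h1
        rwa [hσ p j] at h4
    have hE : {k : ℕ | n ≤ k ∧ f k ∈ B ∧ sigAux h hbij n k ∉ S} ∈ I.sets := by
      have h1 := hwit n _ hA
      rwa [Set.image_preimage_eq _ (hbij n).2] at h1
    have hlt : {k : ℕ | k < n} ∈ I.sets := I.finite_mem _ (Set.finite_Iio n)
    apply I.subset_mem (I.union_mem (I.union_mem hlt hG) hE)
    intro k hk
    by_cases h1 : sigAux h hbij n k ∈ S
    · exact Or.inl (Or.inr h1)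
    · by_cases h2 : n ≤ k
      · exact Or.inr ⟨h2, hk, h1⟩
      · exact Or.inl (Or.inl (by simpa using Nat.lt_of_not_le h2))
  refine ⟨f, hinj, ?_⟩
  intro A hA'
  obtain ⟨F, Bn, hBn, hsub⟩ := hA'
  have hU : ∀ (G : Finset ℕ), (∀ n ∈ G, Bn n ∈ FinPowCopy (X n)) →
      (⋃ n ∈ G, f ⁻¹' Bn n) ∈ I.sets := by
    intro G
    induction G using Finset.induction_on with
    | empty => intro _; simpa using I.finite_mem ∅ Set.finite_empty
    | @insert a G ha ih =>
      intro hmem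
      rw [Finset.set_biUnion_insert]
      exact I.union_mem (key a _ (hmem a (Finset.mem_insert_self a G)))
        (ih fun n hn => hmem n (Finset.mem_insert_of_mem hn))
  apply I.subset_mem (hU F hBn)
  intro k hk
  have h1 := hsub hk
  simp only [Set.mem_iUnion] at h1 ⊢
  obtain ⟨n, hn, hBk⟩ := h1
  exact ⟨n, hn, hBk⟩
end
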